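/- arXiv:2008.04362 — 2 statements merged into one kernel-verified Lean document; each statement's English description precedes it below -/
import Mathlib

section
/- The family C_{1,∞} fails condition (B3). Specifically, let n ≥ 2, θ ∈ (0, π/2) with cos θ > 1/n, and set K_1 = (sin θ) I_n ⊕ [0], K_2 = (cos θ) I_n ⊕ [1] in M_{n+1}(ℂ); then {K_1, K_2} is a set of incoherent Kraus operators, and for ρ = J_{n+1}/(n+1), with p_j = tr(K_j ρ K_j†) and ρ_j = K_j ρ K_j†/p_j, one has Σ_{j=1}^2 p_j C_{1,∞}(ρ_j) − C_{1,∞}(ρ) = (n cos θ − 1)(1 − cos θ)/(n+1) > 0. -/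
/-! The ℓ_{1,∞} distance from `ρ` to the incoherent states is attained at the diagonal part of
`ρ`: for diagonal `σ`, `ρ - σ` has the same off-diagonal entries as `ρ - diag ρ`, whose diagonal
vanishes, and the ℓ_{q,p} norms are monotone in the moduli of the entries. So `C_{1,∞}(ρ)` is
the sum over the columns of the largest off-diagonal modulus. The Kraus operators are diagonal,
`Kⱼ = diag dⱼ`, so `Kⱼ ρ Kⱼ† = (n+1)⁻¹ dⱼ dⱼ†` is rank one and the weight `pⱼ` cancels the
normalisation: `pⱼ C(ρⱼ) = (n+1)⁻¹ ∑ₖ |dₖ| max_{i ≠ k} |dᵢ|`. For `d = (s,…,s,0)`, `(c,…,c,1)`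
and `(1,…,1)` (with `s = sin θ`, `c = cos θ`) this gives `n s²/(n+1)`, `c` and `1`, and
`n s²/(n+1) + c - 1 = (n c - 1)(1 - c)/(n+1)`. -/

open scoped ENNReal ComplexOrder
open Matrix

noncomputable section

/-- The `ℓ_p` norm of a complex vector, `p ∈ [1,∞]`. -/
def lpV (p : ℝ≥0∞) {n : ℕ} (v : Fin n → ℂ) : ℝ :=
  if p = ∞ then ⨆ i, ‖v i‖ else (∑ i, ‖v i‖ ^ p.toReal) ^ (1 / p.toReal)

/-- The `ℓ_{q,p}` norm of a complex matrix: the `ℓ_q` norm of the vector of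
`ℓ_p` norms of its columns. -/
def lqp (q p : ℝ≥0∞) {m n : ℕ} (A : Matrix (Fin m) (Fin n) ℂ) : ℝ :=
  lpV q fun j => ((lpV p fun i => A i j : ℝ) : ℂ)

/-- A density matrix: positive semidefinite with trace one. -/
def IsDensity {n : ℕ} (ρ : Matrix (Fin n) (Fin n) ℂ) : Prop :=
  ρ.PosSemidef ∧ ρ.trace = 1

/-- An incoherent (classical) state: a diagonal density matrix. -/
def IsIncoherentState {n : ℕ} (ρ : Matrix (Fin n) (Fin n) ℂ) : Prop :=
  IsDensity ρ ∧ ρ.IsDiag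

/-- `C_ν(ρ) = min {ν(ρ - σ) : σ ∈ I_n}` (as an infimum). -/
def distC {n : ℕ} (ν : Matrix (Fin n) (Fin n) ℂ → ℝ) (ρ : Matrix (Fin n) (Fin n) ℂ) : ℝ :=
  sInf {x | ∃ σ, IsIncoherentState σ ∧ x = ν (ρ - σ)}

/-- A set of incoherent Kraus operators `K_j : M_{m,n}`:
`∑ K_j† K_j = I` and each `K_j σ K_j†` is diagonal for diagonal densities `σ`. -/
def IsIncoherentKraus {m n r : ℕ} (K : Fin r → Matrix (Fin m) (Fin n) ℂ) : Prop :=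
  (∑ j, (K j)ᴴ * K j) = 1 ∧
  ∀ j (σ : Matrix (Fin n) (Fin n) ℂ), IsIncoherentState σ → (K j * σ * (K j)ᴴ).IsDiag

/-- A family of candidate coherence measures, one for each dimension. -/
abbrev CFam := ∀ n : ℕ, Matrix (Fin n) (Fin n) ℂ → ℝ

/-- Condition (B1) = (C1): nonnegativity, vanishing exactly on incoherent states. -/
def CondB1 (C : CFam) : Prop :=
  ∀ n (ρ : Matrix (Fin n) (Fin n) ℂ), IsDensity ρ →
    0 ≤ C n ρ ∧ (C n ρ = 0 ↔ IsIncoherentState ρ)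

/-- Condition (B2) = (C2): monotonicity under incoherent operations. -/
def CondB2 (C : CFam) : Prop :=
  ∀ (n m r : ℕ) (K : Fin r → Matrix (Fin m) (Fin n) ℂ), IsIncoherentKraus K →
    ∀ ρ, IsDensity ρ → C m (∑ j, K j * ρ * (K j)ᴴ) ≤ C n ρ

/-- Condition (B3): monotonicity on average under selective incoherent operations. -/
def CondB3 (C : CFam) : Prop :=
  ∀ (n m r : ℕ) (K : Fin r → Matrix (Fin m) (Fin n) ℂ), IsIncoherentKraus K →
    ∀ ρ, IsDensity ρ →
      ∑ j, ((K j * ρ * (K j)ᴴ).trace).re *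
          C m (((((K j * ρ * (K j)ᴴ).trace).re)⁻¹ : ℂ) • (K j * ρ * (K j)ᴴ)) ≤ C n ρ

/-- Condition (B4): convexity. -/
def CondB4 (C : CFam) : Prop :=
  ∀ (n r : ℕ) (ρ : Fin r → Matrix (Fin n) (Fin n) ℂ) (p : Fin r → ℝ),
    (∀ j, IsDensity (ρ j)) → (∀ j, 0 ≤ p j) → (∑ j, p j) = 1 →
    C n (∑ j, (p j : ℂ) • ρ j) ≤ ∑ j, p j * C n (ρ j)

/-- Block diagonal direct sum of two square matrices, reindexed to `Fin (n₁ + n₂)`. -/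
def dirSum {n₁ n₂ : ℕ} (A : Matrix (Fin n₁) (Fin n₁) ℂ) (B : Matrix (Fin n₂) (Fin n₂) ℂ) :
    Matrix (Fin (n₁ + n₂)) (Fin (n₁ + n₂)) ℂ :=
  (Matrix.fromBlocks A 0 0 B).submatrix finSumFinEquiv.symm finSumFinEquiv.symm

/-- Condition (C3): additivity under direct sum convex combinations. -/
def CondC3 (C : CFam) : Prop :=
  ∀ (n₁ n₂ : ℕ) (ρ₁ : Matrix (Fin n₁) (Fin n₁) ℂ) (ρ₂ : Matrix (Fin n₂) (Fin n₂) ℂ)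
    (p₁ p₂ : ℝ), IsDensity ρ₁ → IsDensity ρ₂ → 0 ≤ p₁ → 0 ≤ p₂ → p₁ + p₂ = 1 →
    C (n₁ + n₂) (dirSum ((p₁ : ℂ) • ρ₁) ((p₂ : ℂ) • ρ₂)) = p₁ * C n₁ ρ₁ + p₂ * C n₂ ρ₂

/-- A norm on `M_n(ℂ)` (nonnegativity is automatic). -/
def IsMatrixNorm {n : ℕ} (ν : Matrix (Fin n) (Fin n) ℂ → ℝ) : Prop :=
  (∀ A, ν A = 0 ↔ A = 0) ∧ (∀ (c : ℂ) A, ν (c • A) = ‖c‖ * ν A) ∧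
  (∀ A B, ν (A + B) ≤ ν A + ν B)


/-- The `n × n` all-ones matrix `J_n`. -/
def Jmat (n : ℕ) : Matrix (Fin n) (Fin n) ℂ := Matrix.of fun _ _ => 1

/-- The pair of Kraus operators `K₁ = (sin θ) Iₙ ⊕ [0]`, `K₂ = (cos θ) Iₙ ⊕ [1]`
in `M_{n+1}(ℂ)`. -/
def KrausPair (n : ℕ) (θ : ℝ) : Fin 2 → Matrix (Fin (n + 1)) (Fin (n + 1)) ℂ :=
  ![Matrix.diagonal fun i => if (i : ℕ) < n then (Real.sin θ : ℂ) else 0,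
    Matrix.diagonal fun i => if (i : ℕ) < n then (Real.cos θ : ℂ) else 1]

section Norms

variable {p q : ℝ≥0∞} {m n : ℕ}

lemma lpV_nonneg (v : Fin n → ℂ) : 0 ≤ lpV p v := by
  unfold lpV
  split_ifs
  · exact Real.iSup_nonneg fun i => norm_nonneg _
  · positivity

lemma lpV_mono {v w : Fin n → ℂ} (h : ∀ i, ‖v i‖ ≤ ‖w i‖) : lpV p v ≤ lpV p w := by
  unfold lpV
  split_ifs
  · exact ciSup_mono (Set.finite_range _).bddAbove h
  · gcongr with i
    exact h i

lemma lpV_smul (hp : p ≠ 0) (c : ℂ) (v : Fin n → ℂ) : lpV p (c • v) = ‖c‖ * lpV p v := by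
  unfold lpV
  split_ifs with htop
  · simp only [Pi.smul_apply, smul_eq_mul, norm_mul]
    exact (Real.mul_iSup_of_nonneg (norm_nonneg c) _).symm
  · have hr : p.toReal ≠ 0 := ENNReal.toReal_ne_zero.mpr ⟨hp, htop⟩
    simp only [Pi.smul_apply, smul_eq_mul, norm_mul]
    simp_rw [Real.mul_rpow (norm_nonneg c) (norm_nonneg _), ← Finset.mul_sum]
    rw [Real.mul_rpow (by positivity) (by positivity), one_div,
      Real.rpow_rpow_inv (norm_nonneg c) hr]

lemma lqp_mono {A B : Matrix (Fin m) (Fin n) ℂ} (h : ∀ i j, ‖A i j‖ ≤ ‖B i j‖) :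
    lqp q p A ≤ lqp q p B := by
  refine lpV_mono fun j => ?_
  simp only [Complex.norm_real, Real.norm_eq_abs, abs_of_nonneg (lpV_nonneg _)]
  exact lpV_mono fun i => h i j

lemma lqp_smul (hq : q ≠ 0) (hp : p ≠ 0) (c : ℂ) (A : Matrix (Fin m) (Fin n) ℂ) :
    lqp q p (c • A) = ‖c‖ * lqp q p A := by
  have hcol : ∀ j, lpV p (fun i => (c • A) i j) = ‖c‖ * lpV p (fun i => A i j) :=
    fun j => lpV_smul hp c _
  have key := lpV_smul hq (‖c‖ : ℂ) fun j => ((lpV p fun i => A i j : ℝ) : ℂ)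
  rw [Complex.norm_real, norm_norm] at key
  unfold lqp
  rw [← key]
  congr 1
  ext j
  rw [hcol, Pi.smul_apply, smul_eq_mul, Complex.ofReal_mul]

lemma lqp_one_top (A : Matrix (Fin m) (Fin n) ℂ) : lqp 1 ∞ A = ∑ j, ⨆ i, ‖A i j‖ := by
  simp only [lqp, lpV, if_pos, ENNReal.one_ne_top, if_false, ENNReal.toReal_one, Real.rpow_one,
    div_one, Complex.norm_real, Real.norm_eq_abs]
  exact Finset.sum_congr rfl fun j _ => abs_of_nonneg (Real.iSup_nonneg fun i => norm_nonneg _)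

end Norms

section Coherence

variable {p q : ℝ≥0∞} {n : ℕ}

lemma sub_diagonal_diag_apply (A : Matrix (Fin n) (Fin n) ℂ) (i j : Fin n) :
    (A - diagonal A.diag) i j = if i = j then 0 else A i j := by
  by_cases h : i = j
  · subst h
    simp
  · simp [h]

lemma isIncoherentState_diagonal_diag {ρ : Matrix (Fin n) (Fin n) ℂ} (hpos : ∀ i, 0 ≤ ρ i i)
    (htr : ρ.trace = 1) : IsIncoherentState (diagonal ρ.diag) :=
  ⟨⟨posSemidef_diagonal_iff.mpr hpos, by rwa [trace_diagonal]⟩, isDiag_diagonal _⟩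

lemma distC_lqp_eq {ρ : Matrix (Fin n) (Fin n) ℂ} (hρ : IsIncoherentState (diagonal ρ.diag)) :
    distC (lqp q p) ρ = lqp q p (ρ - diagonal ρ.diag) := by
  refine IsLeast.csInf_eq ⟨⟨_, hρ, rfl⟩, ?_⟩
  rintro x ⟨σ, hσ, rfl⟩
  refine lqp_mono fun i j => ?_
  rw [sub_diagonal_diag_apply]
  split_ifs with h
  · simp
  · rw [Matrix.sub_apply, hσ.2 h, sub_zero]

lemma trace_re_mul_distC_inv_smul (hq : q ≠ 0) (hp : p ≠ 0) {M : Matrix (Fin n) (Fin n) ℂ}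
    (hpos : ∀ i, 0 ≤ M i i) (htr : 0 < (M.trace).re) :
    (M.trace).re * distC (lqp q p) ((((M.trace).re)⁻¹ : ℂ) • M) =
      lqp q p (M - diagonal M.diag) := by
  have hreal : ((M.trace).re : ℂ) = M.trace :=
    (Complex.eq_re_of_ofReal_le (r := 0)
      (by simpa [trace] using Finset.sum_nonneg fun i _ => hpos i)).symm
  have hinv : (0 : ℂ) ≤ (((M.trace).re)⁻¹ : ℂ) := by
    rw [← Complex.ofReal_inv]
    exact Complex.zero_le_real.mpr (inv_nonneg.mpr htr.le)
  rw [distC_lqp_eq, diag_smul, diagonal_smul, ← smul_sub, lqp_smul hq hp, norm_inv,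
    Complex.norm_real, Real.norm_of_nonneg htr.le, mul_inv_cancel_left₀ htr.ne']
  refine isIncoherentState_diagonal_diag (fun i => mul_nonneg hinv (hpos i)) ?_
  rw [trace_smul, ← hreal, smul_eq_mul, Complex.ofReal_re,
    inv_mul_cancel₀ (by exact_mod_cast htr.ne')]

lemma isIncoherentKraus_diagonal {r : ℕ} (d : Fin r → Fin n → ℂ)
    (h : ∀ i, ∑ j, star (d j i) * d j i = 1) : IsIncoherentKraus fun j => diagonal (d j) := by
  refine ⟨?_, fun j σ hσ i k hik => ?_⟩
  · ext i k
    simp only [diagonal_conjTranspose, diagonal_mul_diagonal, Matrix.sum_apply, diagonal_apply,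
      one_apply, Pi.star_apply]
    split_ifs
    · exact h i
    · simp
  · change (diagonal (d j) * σ * (diagonal (d j))ᴴ) i k = 0
    rw [diagonal_conjTranspose, mul_diagonal, diagonal_mul, hσ.2 hik, mul_zero, zero_mul]

end Coherence

section RankOne

variable {n : ℕ}

lemma diagonal_mul_smul_Jmat_mul_conjTranspose (d : Fin n → ℂ) (b : ℂ) :
    diagonal d * (b • Jmat n) * (diagonal d)ᴴ = b • vecMulVec d (star d) := by
  ext i j
  simp [Jmat, vecMulVec_apply, mul_diagonal, diagonal_mul]
  ring

lemma lqp_one_top_smul_vecMulVec_sub_diagonal (b : ℂ) (d : Fin n → ℂ) :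
    lqp 1 ∞ (b • vecMulVec d (star d) - diagonal (b • vecMulVec d (star d)).diag) =
      ‖b‖ * ∑ j, ‖d j‖ * ⨆ i, if i = j then 0 else ‖d i‖ := by
  rw [lqp_one_top, Finset.mul_sum]
  refine Finset.sum_congr rfl fun j _ => ?_
  rw [← mul_assoc, Real.mul_iSup_of_nonneg (by positivity)]
  congr 1
  ext i
  rw [sub_diagonal_diag_apply]
  split_ifs <;> simp [vecMulVec_apply]
  ring

lemma trace_re_mul_distC_smul_vecMulVec {p q : ℝ≥0∞} (hq : q ≠ 0) (hp : p ≠ 0) {b : ℂ}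
    (hb : 0 < b) {d : Fin m → ℂ} (hd : d ≠ 0) :
    ((b • vecMulVec d (star d)).trace).re *
        distC (lqp q p) (((((b • vecMulVec d (star d)).trace).re)⁻¹ : ℂ) •
          (b • vecMulVec d (star d))) =
      lqp q p (b • vecMulVec d (star d) - diagonal (b • vecMulVec d (star d)).diag) := by
  obtain ⟨i₀, hi₀⟩ := Function.ne_iff.mp hd
  have hentry : ∀ i, 0 ≤ (b • vecMulVec d (star d)) i i := fun i =>
    mul_nonneg hb.le (mul_star_self_nonneg _)
  refine trace_re_mul_distC_inv_smul hq hp hentry (Complex.pos_iff.mp ?_).1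
  refine Finset.sum_pos' (fun i _ => hentry i) ⟨i₀, Finset.mem_univ _, mul_pos hb ?_⟩
  exact mul_star_self_pos (IsRegular.of_ne_zero hi₀)

end RankOne

lemma ciSup_eq_of_forall_le_of_eq {ι : Type*} [Finite ι] {f : ι → ℝ} {a : ℝ} (i₀ : ι)
    (hle : ∀ i, f i ≤ a) (h : f i₀ = a) : ⨆ i, f i = a :=
  have : Nonempty ι := ⟨i₀⟩
  le_antisymm (ciSup_le hle) (h ▸ le_ciSup (Set.finite_range f).bddAbove i₀)

def blockVec (n : ℕ) (x y : ℂ) : Fin (n + 1) → ℂ := fun i => if (i : ℕ) < n then x else y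

section BlockVec

variable {n : ℕ} {x y : ℂ}

@[simp] lemma blockVec_castSucc (i : Fin n) : blockVec n x y i.castSucc = x := by
  simp [blockVec]

@[simp] lemma blockVec_last : blockVec n x y (Fin.last n) = y := by
  simp [blockVec]

lemma iSup_offDiag_blockVec_last (hn : 1 ≤ n) :
    (⨆ i, if i = Fin.last n then 0 else ‖blockVec n x y i‖) = ‖x‖ := by
  refine ciSup_eq_of_forall_le_of_eq (Fin.castSucc ⟨0, hn⟩) (fun i => ?_)
    (by rw [if_neg (Fin.castSucc_lt_last _).ne, blockVec_castSucc])
  induction i using Fin.lastCases <;> simp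

lemma iSup_offDiag_blockVec_castSucc (hn : 2 ≤ n) (j : Fin n) :
    (⨆ i, if i = j.castSucc then 0 else ‖blockVec n x y i‖) = max ‖x‖ ‖y‖ := by
  have hle : ∀ i, (if i = j.castSucc then 0 else ‖blockVec n x y i‖) ≤ max ‖x‖ ‖y‖ := by
    intro i
    induction i using Fin.lastCases <;> split_ifs <;> simp
  rcases le_total ‖x‖ ‖y‖ with hxy | hyx
  · refine ciSup_eq_of_forall_le_of_eq (Fin.last n) hle ?_
    simp [(Fin.castSucc_lt_last j).ne', hxy]
  · obtain ⟨k, hk⟩ := Fintype.exists_ne_of_one_lt_card (by rw [Fintype.card_fin]; omega) j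
    refine ciSup_eq_of_forall_le_of_eq k.castSucc hle ?_
    simp [hk, hyx]

lemma sum_norm_mul_iSup_offDiag_blockVec (hn : 2 ≤ n) (x y : ℂ) :
    ∑ j, ‖blockVec n x y j‖ * (⨆ i, if i = j then 0 else ‖blockVec n x y i‖) =
      n * (‖x‖ * max ‖x‖ ‖y‖) + ‖y‖ * ‖x‖ := by
  simp only [Fin.sum_univ_castSucc, blockVec_castSucc, blockVec_last,
    iSup_offDiag_blockVec_castSucc hn, iSup_offDiag_blockVec_last (by omega : 1 ≤ n),
    Finset.sum_const, Finset.card_univ, Fintype.card_fin, nsmul_eq_mul]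

end BlockVec

lemma Complex.inv_natCast_add_one_pos {n : ℕ} : (0 : ℂ) < ((n : ℂ) + 1)⁻¹ := by
  have h : ((n : ℂ) + 1)⁻¹ = (((n + 1 : ℝ))⁻¹ : ℝ) := by push_cast; rfl
  rw [h]
  exact Complex.zero_lt_real.mpr (by positivity)

lemma trace_re_mul_distC_blockVec {n : ℕ} (hn : 2 ≤ n) {x : ℂ} (hx : x ≠ 0) (y : ℂ) :
    ((diagonal (blockVec n x y) * (((n : ℂ) + 1)⁻¹ • Jmat (n + 1)) *
        (diagonal (blockVec n x y))ᴴ).trace).re *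
      distC (lqp 1 ∞)
        (((((diagonal (blockVec n x y) * (((n : ℂ) + 1)⁻¹ • Jmat (n + 1)) *
            (diagonal (blockVec n x y))ᴴ).trace).re)⁻¹ : ℂ) •
          (diagonal (blockVec n x y) * (((n : ℂ) + 1)⁻¹ • Jmat (n + 1)) *
            (diagonal (blockVec n x y))ᴴ)) =
      (n * (‖x‖ * max ‖x‖ ‖y‖) + ‖y‖ * ‖x‖) / (n + 1) := by
  have hd : blockVec n x y ≠ 0 := fun h =>
    hx (by simpa using congrFun h (Fin.castSucc ⟨0, by omega⟩))
  rw [diagonal_mul_smul_Jmat_mul_conjTranspose,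
    trace_re_mul_distC_smul_vecMulVec one_ne_zero ENNReal.top_ne_zero
      Complex.inv_natCast_add_one_pos hd,
    lqp_one_top_smul_vecMulVec_sub_diagonal, sum_norm_mul_iSup_offDiag_blockVec hn, norm_inv,
    div_eq_inv_mul]
  norm_cast

lemma distC_lqp_one_top_smul_Jmat {n : ℕ} (hn : 2 ≤ n) :
    distC (lqp 1 ∞) (((n : ℂ) + 1)⁻¹ • Jmat (n + 1)) = 1 := by
  have hJ : Jmat (n + 1) = vecMulVec (blockVec n 1 1) (star (blockVec n 1 1)) := by
    ext i j
    simp [Jmat, blockVec, vecMulVec_apply]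
  have hdiag : IsIncoherentState (diagonal (((n : ℂ) + 1)⁻¹ • Jmat (n + 1)).diag) := by
    refine isIncoherentState_diagonal_diag (fun i => ?_) ?_
    · simpa [Jmat] using Complex.inv_natCast_add_one_pos.le
    simp only [trace, Jmat, smul_of, diag_apply, of_apply, Pi.smul_apply, smul_eq_mul, mul_one,
      Finset.sum_const, Finset.card_univ, Fintype.card_fin, nsmul_eq_mul, Nat.cast_add, Nat.cast_one]
    exact mul_inv_cancel₀ (Nat.cast_add_one_ne_zero n)
  rw [distC_lqp_eq hdiag, hJ, lqp_one_top_smul_vecMulVec_sub_diagonal,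
    sum_norm_mul_iSup_offDiag_blockVec hn, norm_inv]
  norm_cast
  simpa using inv_mul_cancel₀ (Nat.cast_add_one_ne_zero n : ((n : ℝ) + 1) ≠ 0)

lemma krausPair_eq (n : ℕ) (θ : ℝ) :
    KrausPair n θ = ![diagonal (blockVec n (Real.sin θ) 0),
      diagonal (blockVec n (Real.cos θ) 1)] := rfl

lemma isIncoherentKraus_krausPair (n : ℕ) (θ : ℝ) : IsIncoherentKraus (KrausPair n θ) := by
  have hK : KrausPair n θ = fun j =>
      diagonal (![blockVec n (Real.sin θ) 0, blockVec n (Real.cos θ) 1] j) := by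
    ext j : 1
    fin_cases j <;> rfl
  rw [hK]
  refine isIncoherentKraus_diagonal _ fun i => ?_
  induction i using Fin.lastCases
  · simp
  · simp only [Fin.sum_univ_two, Matrix.cons_val_zero, Matrix.cons_val_one, blockVec_castSucc,
      Complex.star_def, Complex.conj_ofReal]
    exact_mod_cast by linear_combination Real.sin_sq_add_cos_sq θ

/-- `C_{1,∞}` fails (B3): for `n ≥ 2`, `θ ∈ (0, π/2)` with `cos θ > 1/n`,
`{K₁, K₂}` is a set of incoherent Kraus operators and, for `ρ = J_{n+1}/(n+1)`,
`∑ⱼ pⱼ C_{1,∞}(ρⱼ) - C_{1,∞}(ρ) = (n cos θ - 1)(1 - cos θ)/(n+1) > 0`. -/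
theorem C_one_infty_fails_B3 (n : ℕ) (hn : 2 ≤ n) (θ : ℝ)
    (hθ0 : 0 < θ) (hθπ : θ < Real.pi / 2) (hcos : 1 / (n : ℝ) < Real.cos θ) :
    IsIncoherentKraus (KrausPair n θ) ∧
    (∑ j : Fin 2,
        ((KrausPair n θ j * (((n : ℂ) + 1)⁻¹ • Jmat (n + 1)) * (KrausPair n θ j)ᴴ).trace).re *
          distC (lqp 1 ∞)
            (((((KrausPair n θ j * (((n : ℂ) + 1)⁻¹ • Jmat (n + 1)) *
                    (KrausPair n θ j)ᴴ).trace).re)⁻¹ : ℂ) •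
              (KrausPair n θ j * (((n : ℂ) + 1)⁻¹ • Jmat (n + 1)) * (KrausPair n θ j)ᴴ)))
        - distC (lqp 1 ∞) (((n : ℂ) + 1)⁻¹ • Jmat (n + 1))
      = ((n : ℝ) * Real.cos θ - 1) * (1 - Real.cos θ) / ((n : ℝ) + 1) ∧
    0 < ((n : ℝ) * Real.cos θ - 1) * (1 - Real.cos θ) / ((n : ℝ) + 1) := by
  have hn0 : (0 : ℝ) < n := by positivity
  have hc0 : 0 < Real.cos θ := (one_div_pos.mpr hn0).trans hcos
  have hc1 : Real.cos θ < 1 := by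
    simpa using Real.cos_lt_cos_of_nonneg_of_le_pi le_rfl (by linarith [Real.pi_pos]) hθ0
  have hs0 : 0 < Real.sin θ := Real.sin_pos_of_pos_of_lt_pi hθ0 (by linarith [Real.pi_pos])
  refine ⟨isIncoherentKraus_krausPair n θ, ?_, ?_⟩
  · rw [Fin.sum_univ_two, krausPair_eq]
    simp only [Matrix.cons_val_zero, Matrix.cons_val_one]
    rw [trace_re_mul_distC_blockVec hn (by exact_mod_cast hs0.ne'),
      trace_re_mul_distC_blockVec hn (by exact_mod_cast hc0.ne'), distC_lqp_one_top_smul_Jmat hn]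
    simp only [Complex.norm_real, Real.norm_of_nonneg hs0.le, Real.norm_of_nonneg hc0.le,
      norm_zero, norm_one, max_eq_left hs0.le, max_eq_right hc1.le]
    field_simp
    linear_combination (n : ℝ) * Real.sin_sq_add_cos_sq θ
  · have : 1 < n * Real.cos θ := by rwa [div_lt_iff₀ hn0, mul_comm] at hcos
    exact div_pos (mul_pos (by linarith) (by linarith)) (by positivity)

end
end

section
/- Let p ∈ [1,∞]. If B ∈ M_n(ℂ) is an extreme point of the unit ball of the ℓ_{1,p}-norm (i.e., of {A ∈ M_n(ℂ) : ℓ_{1,p}(A) ≤ 1}), then B has exactly one nonzero column. -/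
open scoped ENNReal ComplexOrder
open Matrix

noncomputable section

/-!
The `ℓ_{1,p}` norm is absolutely homogeneous and additive over matrices whose nonzero columns
are disjoint. If an extreme point `B` of its unit ball had two nonzero columns, split `B = U + V`
with `U` keeping only the first of these columns; for `T = ‖B‖ = ‖U‖ + ‖V‖`, `B` is the convex
combination of `(T/‖U‖) U` and `(T/‖V‖) V` (both of norm `T ≤ 1`) with weights `‖U‖/T`,
`‖V‖/T`, so these two points coincide, which their disjoint column supports forbid.
Finally `B ≠ 0`, since the ball is balanced and contains a nonzero multiple of any matrix.
-/

section AbsHomogeneous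

variable {E : Type*} [AddCommGroup E] [Module ℝ E] {N : E → ℝ}

theorem zero_notMem_extremePoints_of_abs_smul (hN : ∀ (c : ℝ) (x : E), N (c • x) = |c| * N x)
    {y : E} (hy : y ≠ 0) : (0 : E) ∉ Set.extremePoints ℝ {x | N x ≤ 1} := by
  intro h0
  set c : ℝ := (|N y| + 1)⁻¹ with hc_def
  have hc : 0 < c := by positivity
  have hmem : ∀ s : ℝ, |s| = c → s • y ∈ {x | N x ≤ 1} := by
    intro s hs
    show N (s • y) ≤ 1
    rw [hN, hs, hc_def, inv_mul_le_one₀ (by positivity)]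
    linarith [le_abs_self (N y)]
  have hseg : (0 : E) ∈ openSegment ℝ (c • y) ((-c) • y) :=
    ⟨1 / 2, 1 / 2, by norm_num, by norm_num, by norm_num, by module⟩
  have hcy := h0.2 (hmem c (abs_of_pos hc)) (hmem (-c) (by rw [abs_neg, abs_of_pos hc])) hseg
  exact smul_ne_zero hc.ne' hy hcy

theorem smul_eq_smul_of_add_mem_extremePoints (hN : ∀ (c : ℝ) (x : E), N (c • x) = |c| * N x)
    {u v : E} (h : u + v ∈ Set.extremePoints ℝ {x | N x ≤ 1}) (hadd : N (u + v) = N u + N v)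
    (hu : 0 < N u) (hv : 0 < N v) : N v • u = N u • v := by
  have hT : 0 < N (u + v) := by rw [hadd]; positivity
  have hmem : ∀ w : E, 0 < N w → (N (u + v) / N w) • w ∈ {x | N x ≤ 1} := by
    intro w hw
    show N ((N (u + v) / N w) • w) ≤ 1
    rw [hN, abs_of_pos (by positivity), div_mul_cancel₀ _ hw.ne']
    exact h.1
  have hrescale : ∀ w : E, 0 < N w → (N w / N (u + v)) • (N (u + v) / N w) • w = w := by
    intro w hw
    rw [smul_smul, div_mul_div_cancel₀ hT.ne', div_self hw.ne', one_smul]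
  have hseg : u + v ∈ openSegment ℝ ((N (u + v) / N u) • u) ((N (u + v) / N v) • v) :=
    ⟨N u / N (u + v), N v / N (u + v), by positivity, by positivity,
      by rw [← add_div, ← hadd, div_self hT.ne'], by rw [hrescale u hu, hrescale v hv]⟩
  obtain ⟨hu', hv'⟩ := (mem_extremePoints.1 h).2 _ (hmem u hu) _ (hmem v hv) hseg
  calc N v • u = (N u * N v / N (u + v)) • (N (u + v) / N u) • u := by
        rw [smul_smul]; congr 1; field_simp
    _ = (N u * N v / N (u + v)) • (N (u + v) / N v) • v := by rw [hu'.trans hv'.symm]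
    _ = N u • v := by rw [smul_smul]; congr 1; field_simp

end AbsHomogeneous

section ColumnNorm

variable {p : ℝ≥0∞} [Fact (1 ≤ p)] {m n : ℕ}

theorem lpV_eq_norm_toLp (v : Fin n → ℂ) : lpV p v = ‖WithLp.toLp p v‖ := by
  unfold lpV
  split_ifs with hp
  · subst hp
    rw [PiLp.norm_eq_ciSup]
  · rw [PiLp.norm_eq_sum (ENNReal.toReal_pos (zero_lt_one.trans_le Fact.out).ne' hp)]

theorem lqp_one_eq_sum (A : Matrix (Fin m) (Fin n) ℂ) :
    lqp 1 p A = ∑ j, ‖WithLp.toLp p (fun i => A i j)‖ := by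
  rw [lqp, lpV_eq_norm_toLp, PiLp.norm_eq_of_L1]
  refine Finset.sum_congr rfl fun j _ => ?_
  simp [lpV_eq_norm_toLp]

theorem lqp_one_smul (c : ℝ) (A : Matrix (Fin m) (Fin n) ℂ) :
    lqp 1 p (c • A) = |c| * lqp 1 p A := by
  simp only [lqp_one_eq_sum, Finset.mul_sum, ← Real.norm_eq_abs, ← norm_smul, ← WithLp.toLp_smul]
  rfl

theorem lqp_one_pos {A : Matrix (Fin m) (Fin n) ℂ} (hA : A ≠ 0) : 0 < lqp 1 p A := by
  obtain ⟨i, j, hij⟩ : ∃ i j, A i j ≠ 0 := by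
    by_contra! h
    exact hA (Matrix.ext h)
  rw [lqp_one_eq_sum]
  refine Finset.sum_pos' (fun _ _ => norm_nonneg _) ⟨j, Finset.mem_univ j, norm_pos_iff.2 ?_⟩
  exact fun h => hij (congrFun (congrArg WithLp.ofLp h) i)

theorem lqp_one_add_of_disjoint_cols {A B : Matrix (Fin m) (Fin n) ℂ}
    (h : ∀ j, (fun i => A i j) = 0 ∨ (fun i => B i j) = 0) :
    lqp 1 p (A + B) = lqp 1 p A + lqp 1 p B := by
  simp only [lqp_one_eq_sum, ← Finset.sum_add_distrib]
  refine Finset.sum_congr rfl fun j _ => ?_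
  change ‖WithLp.toLp p ((fun i => A i j) + fun i => B i j)‖ = _
  rcases h j with h0 | h0 <;> simp [h0]

end ColumnNorm

theorem eq_of_col_ne_zero_of_mem_extremePoints {p : ℝ≥0∞} [Fact (1 ≤ p)] {m n : ℕ}
    {B : Matrix (Fin m) (Fin n) ℂ} (hB : B ∈ Set.extremePoints ℝ {A | lqp 1 p A ≤ 1})
    {j₁ j₂ : Fin n} (h₁ : (fun i => B i j₁) ≠ 0) (h₂ : (fun i => B i j₂) ≠ 0) : j₁ = j₂ := by
  by_contra hne
  set U : Matrix (Fin m) (Fin n) ℂ := Matrix.of fun i j => if j = j₁ then B i j else 0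
  set V : Matrix (Fin m) (Fin n) ℂ := Matrix.of fun i j => if j = j₁ then 0 else B i j
  have hUV : U + V = B := by
    ext i j
    by_cases hj : j = j₁ <;> simp [U, V, hj]
  have hdisj : ∀ j, (fun i => U i j) = 0 ∨ (fun i => V i j) = 0 := by
    intro j
    by_cases hj : j = j₁
    · exact .inr (funext fun i => by simp [V, hj])
    · exact .inl (funext fun i => by simp [U, hj])
  obtain ⟨i₁, hi₁⟩ := Function.ne_iff.1 h₁
  obtain ⟨i₂, hi₂⟩ := Function.ne_iff.1 h₂
  have hU : U ≠ 0 := fun h => hi₁ (by simpa [U] using congrFun (congrFun h i₁) j₁)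
  have hV : V ≠ 0 := fun h => hi₂ (by simpa [V, Ne.symm hne] using congrFun (congrFun h i₂) j₂)
  have hsmul := smul_eq_smul_of_add_mem_extremePoints (N := lqp 1 p) lqp_one_smul (hUV ▸ hB)
    (lqp_one_add_of_disjoint_cols hdisj) (lqp_one_pos hU) (lqp_one_pos hV)
  have hentry := congrFun (congrFun hsmul i₁) j₁
  simp only [U, V, Matrix.smul_apply, Matrix.of_apply, if_true, smul_zero, smul_eq_zero] at hentry
  exact hentry.elim (lqp_one_pos hV).ne' hi₁

/-- for `p ∈ [1,∞]` and `n ≥ 1`, an extreme point of the unit ball of the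
`ℓ_{1,p}`-norm on `M_n(ℂ)` has exactly one nonzero column. -/
theorem extreme_point_of_l1p_ball_one_column (p : ℝ≥0∞) (hp : 1 ≤ p) (n : ℕ) (hn : 0 < n)
    (B : Matrix (Fin n) (Fin n) ℂ)
    (hB : B ∈ Set.extremePoints ℝ {A : Matrix (Fin n) (Fin n) ℂ | lqp 1 p A ≤ 1}) :
    ∃! j : Fin n, (fun i => B i j) ≠ 0 := by
  have : Fact (1 ≤ p) := ⟨hp⟩
  have : NeZero n := ⟨hn.ne'⟩
  have hB0 : B ≠ 0 := by
    rintro rfl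
    exact zero_notMem_extremePoints_of_abs_smul lqp_one_smul one_ne_zero hB
  obtain ⟨j, hj⟩ : ∃ j, (fun i => B i j) ≠ 0 := by
    by_contra! h
    exact hB0 (Matrix.ext fun i j => congrFun (h j) i)
  exact ⟨j, hj, fun j' hj' => eq_of_col_ne_zero_of_mem_extremePoints hB hj' hj⟩
end
end
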